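/- Symmetry Theorem: Fix irrational α and N ∈ ℕ, and let W be the cyclic word of length N over {a,b,c} recording the gap sizes of {0α},...,{(N-1)α} (a = smallest, b = middle, c = largest of the occurring gap lengths). If W_J = c, then W_{J-k} = W_{J+k} for k = 0, ..., ℓ, where ℓ+1 is the smallest positive index such that W_{J-(ℓ+1)} = c or W_{J+(ℓ+1)} = c. -/

import Mathlib

/-- The cyclic gap after the point `{m α}` among the points `{0α}, …, {(N-1)α}` on ℝ/ℤ:
the infimum of positive circular distances from `{m α}` to the other points. -/
noncomputable def gapAt (α : ℝ) (N : ℕ) (m : ℕ) : ℝ :=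
  sInf {d : ℝ | 0 < d ∧ ∃ m' : ℕ, m' < N ∧ Int.fract ((m' : ℝ) * α - (m : ℝ) * α) = d}

open Classical in
/-- The set of distinct cyclic gap lengths of the configuration `{0α}, …, {(N-1)α}`. -/
noncomputable def gapSet (α : ℝ) (N : ℕ) : Finset ℝ :=
  (Finset.range N).image (gapAt α N)

/-- The multiset of cyclic gaps of the configuration `{0α}, …, {(N-1)α}`. -/
noncomputable def gapMult (α : ℝ) (N : ℕ) : Multiset ℝ :=
  (Multiset.range N).map (gapAt α N)

/-- Cyclic extension of the ordering permutation `u` to integer indices, mod `N`. -/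
def uc (N : ℕ) (u : ℕ → ℕ) (j : ℤ) : ℕ := u ((j % (N : ℤ)).toNat)

/-!
Let `a` and `b` be the indices `0 < k < N` at which `{kα}` is smallest and largest. By the
three-gap theorem the point following `{mα}` on the circle is `{(m + d)α}`, where `d = a` if
`m + a < N`, `d = -b` if `b ≤ m`, and `d = a - b` otherwise, and the gap between them is `{dα}`;
the gap of offset `a - b` is the sum of the other two, hence the largest one. So the indices
`s j` of the sorted points form a cyclic walk with steps `a`, `-b`, `a - b`. If the step at `J`
is `a - b`, then `s (J + k + 1) + s (J - k)` stays equal to `s (J + 1) + s J` until the next such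
step: the walk read forwards from `s (J + 1)` and backwards from `s J` must take the same steps,
since a step `a` on one side against `-b` on the other would push an index out of `[0, N)`.
-/

namespace Int

variable {R : Type*} [Ring R] [LinearOrder R] [IsStrictOrderedRing R] [FloorRing R] {x y : R}

theorem fract_sub_of_fract_le (h : fract y ≤ fract x) : fract (x - y) = fract x - fract y := by
  refine fract_eq_iff.2
    ⟨sub_nonneg.2 h, (sub_le_self _ (fract_nonneg y)).trans_lt (fract_lt_one x), ⌊x⌋ - ⌊y⌋, ?_⟩
  simp only [fract, cast_sub]
  abel

theorem fract_sub_of_fract_lt (h : fract x < fract y) :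
    fract (x - y) = fract x - fract y + 1 := by
  refine fract_eq_iff.2 ⟨?_, add_lt_of_neg_left 1 (sub_neg.2 h), ⌊x⌋ - ⌊y⌋ - 1, ?_⟩
  · rw [sub_add_eq_add_sub, sub_nonneg]
    exact (fract_lt_one y).le.trans (le_add_of_nonneg_left (fract_nonneg x))
  · simp only [fract, cast_sub, cast_one]
    abel

end Int

noncomputable def fractMul (α : ℝ) (d : ℤ) : ℝ := Int.fract (d * α)

section FractMul

variable {α : ℝ} {d e : ℤ}

theorem fractMul_nonneg (α : ℝ) (d : ℤ) : 0 ≤ fractMul α d := Int.fract_nonneg _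

theorem fractMul_lt_one (α : ℝ) (d : ℤ) : fractMul α d < 1 := Int.fract_lt_one _

@[simp]
theorem fractMul_zero (α : ℝ) : fractMul α 0 = 0 := by simp [fractMul]

theorem fractMul_natCast_sub (α : ℝ) (k m : ℕ) :
    fractMul α (k - m) = Int.fract ((k : ℝ) * α - m * α) := by
  simp only [fractMul, Int.cast_sub, Int.cast_natCast, sub_mul]

theorem fractMul_sub_of_le (h : fractMul α e ≤ fractMul α d) :
    fractMul α (d - e) = fractMul α d - fractMul α e := by
  simp only [fractMul, Int.cast_sub, sub_mul] at h ⊢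
  exact Int.fract_sub_of_fract_le h

theorem fractMul_sub_of_lt (h : fractMul α d < fractMul α e) :
    fractMul α (d - e) = fractMul α d - fractMul α e + 1 := by
  simp only [fractMul, Int.cast_sub, sub_mul] at h ⊢
  exact Int.fract_sub_of_fract_lt h

theorem fractMul_injective (hα : Irrational α) : Function.Injective (fractMul α) := by
  intro d e h
  obtain ⟨z, hz⟩ := Int.fract_eq_fract.1 h
  by_contra hde
  refine (hα.intCast_mul (sub_ne_zero.2 hde)).ne_int z ?_
  rw [← hz]; push_cast; ring

theorem fractMul_pos (hα : Irrational α) (hd : d ≠ 0) : 0 < fractMul α d :=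
  (fractMul_nonneg α d).lt_of_ne fun h =>
    hd <| fractMul_injective hα <| by rw [← h, fractMul_zero]

theorem fractMul_neg (hα : Irrational α) (hd : d ≠ 0) : fractMul α (-d) = 1 - fractMul α d := by
  have := fractMul_sub_of_lt (α := α) (d := 0) (e := d)
    (by rw [fractMul_zero]; exact fractMul_pos hα hd)
  rwa [zero_sub, fractMul_zero, zero_sub, neg_add_eq_sub] at this

end FractMul

/-- `d` is the offset `m' - m` from the point `{mα}` to the next point `{m'α}` of
`{0α}, …, {(N-1)α}` in the positive direction on `ℝ/ℤ`. -/
def IsNextOffset (α : ℝ) (N m : ℕ) (d : ℤ) : Prop :=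
  d ≠ 0 ∧ 0 ≤ m + d ∧ m + d < N ∧ ∀ k < N, k ≠ m → fractMul α d ≤ fractMul α (k - m)

section IsNextOffset

variable {α : ℝ} {N m : ℕ} {d d' : ℤ}

theorem isNextOffset_of_forall (hα : Irrational α) (hd : d ≠ 0) (hd₀ : 0 ≤ m + d) (hdN : m + d < N)
    (hfwd : ∀ e : ℤ, 0 < e → m + e < N → fractMul α d ≤ fractMul α e)
    (hbwd : ∀ e : ℤ, 0 < e → e ≤ m → fractMul α d ≤ 1 - fractMul α e) :
    IsNextOffset α N m d := by
  refine ⟨hd, hd₀, hdN, fun k hk hkm => ?_⟩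
  rcases lt_or_gt_of_ne (sub_ne_zero.2 (Nat.cast_injective.ne hkm : (k : ℤ) ≠ m)) with h | h
  · rw [show (k : ℤ) - m = -(m - k) by ring, fractMul_neg hα (by omega)]
    exact hbwd _ (by omega) (by omega)
  · exact hfwd _ h (by omega)

theorem IsNextOffset.eq (hα : Irrational α) (h : IsNextOffset α N m d)
    (h' : IsNextOffset α N m d') : d = d' := by
  have key : ∀ {d d'}, IsNextOffset α N m d → IsNextOffset α N m d' →
      fractMul α d ≤ fractMul α d' := fun {d d'} h ⟨_, h₀, hN, _⟩ => by
    simpa [Int.toNat_of_nonneg h₀] using h.2.2.2 (m + d').toNat (by omega) (by omega)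
  exact fractMul_injective hα (le_antisymm (key h h') (key h' h))

theorem gapAt_eq_of_isNextOffset (hα : Irrational α) (h : IsNextOffset α N m d) :
    gapAt α N m = fractMul α d := by
  obtain ⟨hd, h₀, hN, hmin⟩ := h
  refine IsLeast.csInf_eq ⟨⟨fractMul_pos hα hd, (m + d).toNat, by omega, ?_⟩, ?_⟩
  · rw [← fractMul_natCast_sub]; congr; omega
  · rintro _ ⟨hpos, k, hk, rfl⟩
    rw [← fractMul_natCast_sub] at hpos ⊢
    refine hmin k hk fun hkm => ?_
    simp [hkm, fractMul] at hpos

end IsNextOffset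

structure ExtremalIndices (α : ℝ) (N a b : ℕ) : Prop where
  a_pos : 0 < a
  a_lt : a < N
  b_pos : 0 < b
  b_lt : b < N
  min : ∀ k : ℤ, 0 < k → k < N → fractMul α a ≤ fractMul α k
  max : ∀ k : ℤ, 0 < k → k < N → fractMul α k ≤ fractMul α b

theorem exists_extremalIndices (α : ℝ) {N : ℕ} (hN : 2 ≤ N) :
    ∃ a b, ExtremalIndices α N a b := by
  have hne : (Finset.Ioo (0 : ℤ) N).Nonempty := ⟨1, Finset.mem_Ioo.2 ⟨one_pos, by omega⟩⟩
  obtain ⟨a, ha, hmin⟩ := (Finset.Ioo (0 : ℤ) N).exists_min_image (fractMul α) hne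
  obtain ⟨b, hb, hmax⟩ := (Finset.Ioo (0 : ℤ) N).exists_max_image (fractMul α) hne
  rw [Finset.mem_Ioo] at ha hb
  lift a to ℕ using ha.1.le
  lift b to ℕ using hb.1.le
  exact ⟨a, b, by omega, by omega, by omega, by omega,
    fun k h₀ hN => hmin k (Finset.mem_Ioo.2 ⟨h₀, hN⟩),
    fun k h₀ hN => hmax k (Finset.mem_Ioo.2 ⟨h₀, hN⟩)⟩

def nextOffset (N a b m : ℕ) : ℤ :=
  if m + a < N then a else if b ≤ m then -b else a - b

theorem nextOffset_eq_or (N a b m : ℕ) :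
    nextOffset N a b m = a ∨ nextOffset N a b m = -b ∨ nextOffset N a b m = a - b := by
  unfold nextOffset
  split_ifs <;> simp

namespace ExtremalIndices

variable {α : ℝ} {N a b : ℕ} {e : ℤ}

theorem fractMul_a_lt_b (hα : Irrational α) (h : ExtremalIndices α N a b) (hN : 3 ≤ N) :
    fractMul α a < fractMul α b := by
  refine (h.min b (by exact_mod_cast h.b_pos) (by exact_mod_cast h.b_lt)).lt_of_ne fun hab => ?_
  have hconst : ∀ k : ℤ, 0 < k → k < N → fractMul α k = fractMul α a := fun k h₀ hN =>
    le_antisymm (hab ▸ h.max k h₀ hN) (h.min k h₀ hN)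
  have := (hconst 1 one_pos (by omega)).trans (hconst 2 two_pos (by omega)).symm
  have := fractMul_injective hα this
  omega

theorem fractMul_neg_b (hα : Irrational α) (h : ExtremalIndices α N a b) :
    fractMul α (-b) = 1 - fractMul α b :=
  fractMul_neg hα (by exact_mod_cast h.b_pos.ne')

theorem fractMul_a_sub_b (hα : Irrational α) (h : ExtremalIndices α N a b) (hN : 3 ≤ N) :
    fractMul α (a - b) = fractMul α a + (1 - fractMul α b) := by
  rw [fractMul_sub_of_lt (h.fractMul_a_lt_b hα hN)]
  ring

theorem fractMul_a_le_one_sub (h : ExtremalIndices α N a b) (he : 0 < e) (heN : e + a < N) :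
    fractMul α a ≤ 1 - fractMul α e := by
  have hea := h.min (e + a) (by omega) heN
  have := fractMul_sub_of_le hea
  rw [add_sub_cancel_right] at this
  linarith [fractMul_lt_one α (e + a)]

theorem one_sub_fractMul_b_le (hα : Irrational α) (h : ExtremalIndices α N a b) (he : 0 < e)
    (heN : e + b < N) : 1 - fractMul α b ≤ fractMul α e := by
  have heb : fractMul α (e + b) < fractMul α b :=
    (h.max (e + b) (by omega) heN).lt_of_ne ((fractMul_injective hα).ne (by omega))
  have := fractMul_sub_of_lt heb
  rw [add_sub_cancel_right] at this
  linarith [fractMul_nonneg α (e + b)]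

theorem fractMul_a_add_le (hα : Irrational α) (h : ExtremalIndices α N a b) (he : 0 < e)
    (hea : e < a) : fractMul α a + (1 - fractMul α b) ≤ fractMul α e := by
  have := h.a_lt
  have hae : fractMul α a < fractMul α e :=
    (h.min e he (by omega)).lt_of_ne ((fractMul_injective hα).ne (by omega))
  have := h.max (a - e) (by omega) (by omega)
  rw [fractMul_sub_of_lt hae] at this
  linarith

theorem fractMul_a_add_le_one_sub (hα : Irrational α) (h : ExtremalIndices α N a b) (he : 0 < e)
    (heb : e < b) : fractMul α a + (1 - fractMul α b) ≤ 1 - fractMul α e := by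
  have := h.b_lt
  have heb' : fractMul α e < fractMul α b :=
    (h.max e he (by omega)).lt_of_ne ((fractMul_injective hα).ne (by omega))
  have := h.min (b - e) (by omega) (by omega)
  rw [fractMul_sub_of_le heb'.le] at this
  linarith

theorem isNextOffset (hα : Irrational α) (h : ExtremalIndices α N a b) {m : ℕ} (hm : m < N) :
    IsNextOffset α N m (nextOffset N a b m) := by
  have := h.a_pos; have := h.a_lt; have := h.b_pos; have := h.b_lt
  unfold nextOffset
  split_ifs with hma hbm
  · exact isNextOffset_of_forall hα (by omega) (by omega) (by omega)
      (fun e he hme => h.min e he (by omega))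
      (fun e he hem => h.fractMul_a_le_one_sub he (by omega))
  · exact isNextOffset_of_forall hα (by omega) (by omega) (by omega)
      (fun e he hme => (h.fractMul_neg_b hα).trans_le (h.one_sub_fractMul_b_le hα he (by omega)))
      (fun e he hem => (h.fractMul_neg_b hα).trans_le (by linarith [h.max e he (by omega)]))
  · have hN : 3 ≤ N := by omega
    have hne : (a : ℤ) - b ≠ 0 :=
      sub_ne_zero.2 fun hab => (h.fractMul_a_lt_b hα hN).ne (congrArg _ hab)
    have hab := h.fractMul_a_sub_b hα hN
    exact isNextOffset_of_forall hα hne (by omega) (by omega)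
      (fun e he hme => hab.trans_le (h.fractMul_a_add_le hα he (by omega)))
      (fun e he hem => hab.trans_le (h.fractMul_a_add_le_one_sub hα he (by omega)))

theorem gapAt_eq (hα : Irrational α) (h : ExtremalIndices α N a b) {m : ℕ} (hm : m < N) :
    gapAt α N m = fractMul α (nextOffset N a b m) :=
  gapAt_eq_of_isNextOffset hα (h.isNextOffset hα hm)

end ExtremalIndices

theorem fract_sub_succ_le_of_strictMonoOn {N : ℕ} {x : ℕ → ℝ}
    (hx : StrictMonoOn (fun j => Int.fract (x j)) (Set.Iio N)) {r j : ℕ} (hr : r < N)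
    (hj : j < N) (hjr : j ≠ r) : Int.fract (x ((r + 1) % N) - x r) ≤ Int.fract (x j - x r) := by
  have hmem : ∀ {i}, i < N → i ∈ Set.Iio N := id
  rcases Nat.lt_or_ge (r + 1) N with hrN | hrN
  · rw [Nat.mod_eq_of_lt hrN,
      Int.fract_sub_of_fract_le (hx (hmem hr) (hmem hrN) r.lt_succ_self).le]
    rcases lt_or_gt_of_ne hjr with hjr | hrj
    · rw [Int.fract_sub_of_fract_lt (hx (hmem hj) (hmem hr) hjr)]
      linarith [Int.fract_lt_one (x (r + 1)), Int.fract_nonneg (x j)]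
    · rw [Int.fract_sub_of_fract_le (hx (hmem hr) (hmem hj) hrj).le]
      linarith [hx.monotoneOn (hmem hrN) (hmem hj) hrj]
  · have hjr : j < r := by omega
    rw [show r + 1 = N by omega, Nat.mod_self,
      Int.fract_sub_of_fract_lt (hx (hmem (by omega)) (hmem hr) (by omega)),
      Int.fract_sub_of_fract_lt (hx (hmem hj) (hmem hr) hjr)]
    linarith [hx.monotoneOn (hmem (by omega)) (hmem hj) j.zero_le]

theorem isNextOffset_of_strictMonoOn {α : ℝ} {N : ℕ} {u : ℕ → ℕ}
    (hbij : Set.BijOn u (Set.Iio N) (Set.Iio N))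
    (hmono : StrictMonoOn (fun j => Int.fract ((u j : ℝ) * α)) (Set.Iio N)) (hN : 2 ≤ N)
    {r : ℕ} (hr : r < N) : IsNextOffset α N (u r) (u ((r + 1) % N) - u r) := by
  have hr' : (r + 1) % N < N := Nat.mod_lt _ (by omega)
  have hne : (r + 1) % N ≠ r := by
    rcases Nat.lt_or_ge (r + 1) N with h | h
    · rw [Nat.mod_eq_of_lt h]; omega
    · rw [show r + 1 = N by omega, Nat.mod_self]; omega
  refine ⟨sub_ne_zero.2 (Nat.cast_injective.ne (hbij.injOn.ne hr' hr hne)), by omega,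
    by simpa using hbij.mapsTo hr', fun k hk hkr => ?_⟩
  obtain ⟨j, hj, rfl⟩ := hbij.surjOn hk
  rw [fractMul_natCast_sub, fractMul_natCast_sub]
  exact fract_sub_succ_le_of_strictMonoOn hmono hr hj (by rintro rfl; exact hkr rfl)

theorem uc_lt {N : ℕ} {u : ℕ → ℕ} (hbij : Set.BijOn u (Set.Iio N) (Set.Iio N)) (hN : 0 < N)
    (j : ℤ) : uc N u j < N :=
  hbij.mapsTo (Int.natMod_lt (m := j) hN.ne')

theorem uc_natCast {N J : ℕ} (u : ℕ → ℕ) (hJ : J < N) : uc N u J = u J := by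
  simp [uc, Int.emod_eq_of_lt (Int.natCast_nonneg J) (by omega : (J : ℤ) < N)]

theorem uc_add_one {N : ℕ} (u : ℕ → ℕ) (hN : 0 < N) (j : ℤ) :
    uc N u (j + 1) = u (((j % N).toNat + 1) % N) := by
  unfold uc
  congr 1
  have := Int.emod_nonneg j (by omega : (N : ℤ) ≠ 0)
  rw [← Int.toNat_natCast (((j % N).toNat + 1) % N)]
  push_cast
  rw [Int.toNat_of_nonneg this, Int.emod_add_emod]

theorem card_gapSet_le (α : ℝ) (N : ℕ) : (gapSet α N).card ≤ N :=
  (Finset.card_image_le).trans_eq (Finset.card_range N)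

namespace ExtremalIndices

variable {α : ℝ} {N a b : ℕ}

theorem uc_add_one_eq_add_nextOffset {u : ℕ → ℕ} (hα : Irrational α) (h : ExtremalIndices α N a b)
    (hbij : Set.BijOn u (Set.Iio N) (Set.Iio N))
    (hmono : StrictMonoOn (fun j => Int.fract ((u j : ℝ) * α)) (Set.Iio N)) (j : ℤ) :
    (uc N u (j + 1) : ℤ) = uc N u j + nextOffset N a b (uc N u j) := by
  have hN : 2 ≤ N := by have := h.a_pos; have := h.a_lt; omega
  have hr : (j % N).toNat < N := Int.natMod_lt (by omega)
  have := (isNextOffset_of_strictMonoOn hbij hmono hN hr).eq hα (h.isNextOffset hα (hbij.mapsTo hr))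
  rw [uc_add_one u (by omega)]
  unfold uc
  omega

theorem exists_nextOffset_eq (hα : Irrational α) (h : ExtremalIndices α N a b)
    (h3 : (gapSet α N).card = 3) : ∃ m < N, nextOffset N a b m = a - b := by
  by_contra! hne
  have hsub : gapSet α N ⊆ {fractMul α a, fractMul α (-b)} := by
    intro x hx
    obtain ⟨m, hm, rfl⟩ := Finset.mem_image.1 hx
    rw [Finset.mem_range] at hm
    rw [h.gapAt_eq hα hm]
    rcases nextOffset_eq_or N a b m with e | e | e
    · simp [e]
    · simp [e]
    · exact absurd e (hne m hm)
  have := (Finset.card_le_card hsub).trans Finset.card_le_two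
  omega

theorem nextOffset_eq_of_forall_gapAt_le (hα : Irrational α) (h : ExtremalIndices α N a b)
    (h3 : (gapSet α N).card = 3) {m : ℕ} (hm : m < N)
    (hmax : ∀ m' < N, gapAt α N m' ≤ gapAt α N m) : nextOffset N a b m = a - b := by
  obtain ⟨m', hm', hc⟩ := h.exists_nextOffset_eq hα h3
  by_contra hne
  have hlt : fractMul α (nextOffset N a b m) < fractMul α (a - b) := by
    rw [h.fractMul_a_sub_b hα (h3 ▸ card_gapSet_le α N)]
    rcases nextOffset_eq_or N a b m with e | e | e
    · rw [e]; linarith [fractMul_lt_one α b]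
    · rw [e, h.fractMul_neg_b hα]
      linarith [fractMul_pos hα (by exact_mod_cast h.a_pos.ne' : (a : ℤ) ≠ 0)]
    · exact absurd e hne
  have := hmax m' hm'
  rw [h.gapAt_eq hα hm', h.gapAt_eq hα hm, hc] at this
  linarith

end ExtremalIndices

section Walk

variable {N a b : ℕ}

theorem nextOffset_eq_of_add_eq (ha : 0 < a) (hb : 0 < b) {c p q : ℕ}
    (hc : nextOffset N a b c = a - b) (hp : p < N) (hq : q < N)
    (hp' : nextOffset N a b p ≠ a - b) (hq' : nextOffset N a b q ≠ a - b)
    (hsum : (p : ℤ) + q + nextOffset N a b q = c + c + nextOffset N a b c) :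
    nextOffset N a b p = nextOffset N a b q := by
  unfold nextOffset at *
  split_ifs at * <;> omega

theorem nextOffset_symm (ha : 0 < a) (hb : 0 < b) {s : ℤ → ℕ}
    (hs : ∀ j, (s (j + 1) : ℤ) = s j + nextOffset N a b (s j)) (hsN : ∀ j, s j < N) {J : ℤ}
    (hJ : nextOffset N a b (s J) = a - b) {ℓ : ℕ}
    (hℓ : ∀ i : ℕ, 1 ≤ i → i ≤ ℓ →
      nextOffset N a b (s (J - i)) ≠ a - b ∧ nextOffset N a b (s (J + i)) ≠ a - b) :
    ∀ k ≤ ℓ, nextOffset N a b (s (J - k)) = nextOffset N a b (s (J + k)) := by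
  have step (k : ℕ) (hk : k < ℓ) (hsum : (s (J + k + 1) : ℤ) + s (J - k) = s (J + 1) + s J) :
      nextOffset N a b (s (J + k + 1)) = nextOffset N a b (s (J - k - 1)) := by
    have hq := hs (J - k - 1)
    rw [sub_add_cancel] at hq
    have := hℓ (k + 1) (by omega) hk
    push_cast [← add_assoc, ← sub_sub] at this
    exact nextOffset_eq_of_add_eq ha hb hJ (hsN _) (hsN _) this.2 this.1 (by linarith [hs J])
  have inv : ∀ k ≤ ℓ, (s (J + k + 1) : ℤ) + s (J - k) = s (J + 1) + s J := by
    intro k hk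
    induction k with
    | zero => simp
    | succ k ih =>
      have hq := hs (J - k - 1)
      rw [sub_add_cancel] at hq
      push_cast [← add_assoc, ← sub_sub]
      linarith [hs (J + k + 1), step k hk (ih (by omega)), ih (by omega)]
  rintro (_ | k) hk
  · simp
  · push_cast [← add_assoc, ← sub_sub]
    exact (step k hk (inv k (by omega))).symm

end Walk

theorem symmetry_theorem_general (α : ℝ) (hα : Irrational α) (N : ℕ)
    (u : ℕ → ℕ) (hbij : Set.BijOn u (Set.Iio N) (Set.Iio N))
    (hmono : StrictMonoOn (fun j => Int.fract ((u j : ℝ) * α)) (Set.Iio N))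
    (h3 : (gapSet α N).card = 3)
    (J : ℕ) (hJ : J < N)
    (hmax : ∀ m < N, gapAt α N m ≤ gapAt α N (u J))
    (ℓ : ℕ)
    (hlt : ∀ i : ℕ, 1 ≤ i → i ≤ ℓ →
      gapAt α N (uc N u ((J : ℤ) - (i : ℤ))) ≠ gapAt α N (u J) ∧
      gapAt α N (uc N u ((J : ℤ) + (i : ℤ))) ≠ gapAt α N (u J)) :
    ∀ k : ℕ, k ≤ ℓ →
      gapAt α N (uc N u ((J : ℤ) - (k : ℤ))) =
        gapAt α N (uc N u ((J : ℤ) + (k : ℤ))) := by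
  have hN : 3 ≤ N := h3 ▸ card_gapSet_le α N
  obtain ⟨a, b, h⟩ := exists_extremalIndices α (by omega : 2 ≤ N)
  have hsN : ∀ j, uc N u j < N := uc_lt hbij (by omega)
  have hgap : ∀ j, gapAt α N (uc N u j) = fractMul α (nextOffset N a b (uc N u j)) :=
    fun j => h.gapAt_eq hα (hsN j)
  have hJc : nextOffset N a b (uc N u J) = a - b := by
    rw [uc_natCast u hJ]
    exact h.nextOffset_eq_of_forall_gapAt_le hα h3 (hbij.mapsTo hJ) hmax
  have hJgap : gapAt α N (u J) = fractMul α (a - b) := by rw [← uc_natCast u hJ, hgap, hJc]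
  have hnot (i : ℕ) (hi : 1 ≤ i) (hiℓ : i ≤ ℓ) :
      nextOffset N a b (uc N u (J - i)) ≠ a - b ∧ nextOffset N a b (uc N u (J + i)) ≠ a - b :=
    (hlt i hi hiℓ).imp (fun hne hc => hne (by rw [hgap, hc, hJgap]))
      (fun hne hc => hne (by rw [hgap, hc, hJgap]))
  intro k hk
  rw [hgap, hgap, nextOffset_symm h.a_pos h.b_pos (h.uc_add_one_eq_add_nextOffset hα hbij hmono)
    hsN hJc hnot k hk]

theorem symmetry_theorem (α : ℝ) (hα : Irrational α) (N : ℕ)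
    (u : ℕ → ℕ) (hbij : Set.BijOn u (Set.Iio N) (Set.Iio N))
    (hmono : StrictMonoOn (fun j => Int.fract ((u j : ℝ) * α)) (Set.Iio N))
    (h3 : (gapSet α N).card = 3)
    (J : ℕ) (hJ : J < N)
    (hmax : ∀ m < N, gapAt α N m ≤ gapAt α N (u J))
    (ℓ : ℕ)
    (hlt : ∀ i : ℕ, 1 ≤ i → i ≤ ℓ →
      gapAt α N (uc N u ((J : ℤ) - (i : ℤ))) ≠ gapAt α N (u J) ∧
      gapAt α N (uc N u ((J : ℤ) + (i : ℤ))) ≠ gapAt α N (u J))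
    (hstop : gapAt α N (uc N u ((J : ℤ) - ((ℓ : ℤ) + 1))) = gapAt α N (u J) ∨
      gapAt α N (uc N u ((J : ℤ) + ((ℓ : ℤ) + 1))) = gapAt α N (u J)) :
    ∀ k : ℕ, k ≤ ℓ →
      gapAt α N (uc N u ((J : ℤ) - (k : ℤ))) =
        gapAt α N (uc N u ((J : ℤ) + (k : ℤ))) :=
  symmetry_theorem_general α hα N u hbij hmono h3 J hJ hmax ℓ hlt
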